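/- arXiv:2007.09218 — 3 statements merged into one kernel-verified Lean document; each statement's English description precedes it below -/
import Mathlib

section
/- Let (H,R,ψ,J,k) be an almost cylindrical bialgebra: (ψ,J) is a twist pair (ψ is an algebra automorphism, J a Drinfeld twist with Δ^{op,ψ}(x) = J·Δ(x)·J⁻¹ for all x and (ψ⊗ψ)(R₂₁) = J₂₁·R·J⁻¹) and k ∈ H is invertible with Δ(k) = J⁻¹·(1⊗k)·(ψ⊗id)(R)·(k⊗1). Then k satisfies the ψ-twisted reflection equation (k⊗1)·(R^ψ)₂₁·(1⊗k)·R = (ψ⊗ψ)(R₂₁)·(1⊗k)·R^ψ·(k⊗1), where R^ψ := (ψ⊗id)(R). -/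
noncomputable section
open TensorProduct

variable (F : Type*) [CommRing F] (H : Type*) [Ring H] [Bialgebra F H]

/-- The flip map on `H ⊗ H`. -/
def τ₂ : H ⊗[F] H ≃ₐ[F] H ⊗[F] H := Algebra.TensorProduct.comm F H H

/-- Embedding of `H ⊗ H` into the first two factors of `(H ⊗ H) ⊗ H`. -/
def ι₁₂ : H ⊗[F] H →ₐ[F] (H ⊗[F] H) ⊗[F] H := Algebra.TensorProduct.includeLeft

/-- Embedding of `H ⊗ H` into the last two factors of `(H ⊗ H) ⊗ H`. -/
def ι₂₃ : H ⊗[F] H →ₐ[F] (H ⊗[F] H) ⊗[F] H :=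
  Algebra.TensorProduct.map Algebra.TensorProduct.includeRight (AlgHom.id F H)

/-- Embedding of `H ⊗ H` into the outer factors of `(H ⊗ H) ⊗ H`. -/
def ι₁₃ : H ⊗[F] H →ₐ[F] (H ⊗[F] H) ⊗[F] H :=
  Algebra.TensorProduct.map Algebra.TensorProduct.includeLeft (AlgHom.id F H)

/-- The image in `(H⊗H)ˣ` of a unit under the flip map. -/
def uflip (R : (H ⊗[F] H)ˣ) : (H ⊗[F] H)ˣ :=
  ⟨τ₂ F H ↑R, τ₂ F H ↑R⁻¹,
    by rw [← map_mul, Units.mul_inv, map_one],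
    by rw [← map_mul, Units.inv_mul, map_one]⟩

/-- Conjugation by a unit, as an algebra automorphism. -/
def Ad {A : Type*} [Ring A] [Algebra F A] (u : Aˣ) : A ≃ₐ[F] A where
  toFun x := ↑u * x * ↑u⁻¹
  invFun x := ↑u⁻¹ * x * ↑u
  left_inv x := by simp [mul_assoc]
  right_inv x := by simp [mul_assoc]
  map_mul' x y := by simp [mul_assoc]
  map_add' x y := by (try dsimp only); rw [mul_add, add_mul]
  commutes' r := by (try dsimp only); rw [← Algebra.commutes, mul_assoc, Units.mul_inv, mul_one]

/-- The unit `(g ⊗ g)` of `H ⊗ H` attached to a unit `g` of `H`. -/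
def uTmul (g : Hˣ) : (H ⊗[F] H)ˣ :=
  ⟨(↑g : H) ⊗ₜ[F] (↑g : H), (↑g⁻¹ : H) ⊗ₜ[F] (↑g⁻¹ : H),
    by rw [Algebra.TensorProduct.tmul_mul_tmul, Units.mul_inv, ← Algebra.TensorProduct.one_def],
    by rw [Algebra.TensorProduct.tmul_mul_tmul, Units.inv_mul, ← Algebra.TensorProduct.one_def]⟩

/-- The comultiplication of the bialgebra `H`. -/
def Δ : H →ₐ[F] H ⊗[F] H := Bialgebra.comulAlgHom F H

/-- The counit of the bialgebra `H`. -/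
def ε : H →ₐ[F] F := Bialgebra.counitAlgHom F H

/-- The opposite comultiplication `Δ^op = flip ∘ Δ`. -/
def Δop : H →ₐ[F] H ⊗[F] H := (τ₂ F H).toAlgHom.comp (Δ F H)

/-- `(Δ ⊗ id)` as a map `H ⊗ H → (H ⊗ H) ⊗ H`. -/
def Δ₁ : H ⊗[F] H →ₐ[F] (H ⊗[F] H) ⊗[F] H :=
  Algebra.TensorProduct.map (Δ F H) (AlgHom.id F H)

/-- `(id ⊗ Δ)`, reassociated into `(H ⊗ H) ⊗ H`. -/
def Δ₂ : H ⊗[F] H →ₐ[F] (H ⊗[F] H) ⊗[F] H :=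
  ((Algebra.TensorProduct.assoc F F F H H H).symm.toAlgHom).comp
    (Algebra.TensorProduct.map (AlgHom.id F H) (Δ F H))

/-- Quasitriangularity of an invertible `R ∈ H ⊗ H` with respect to a coproduct `Δ'`:
`R Δ'(x) = Δ'^op(x) R`, `(Δ'⊗id)(R) = R₁₃R₂₃` and `(id⊗Δ')(R) = R₁₃R₁₂`. -/
def IsQuasiTri (Δ' : H →ₐ[F] H ⊗[F] H) (R : (H ⊗[F] H)ˣ) : Prop :=
  (∀ x : H, (↑R : H ⊗[F] H) * Δ' x = τ₂ F H (Δ' x) * ↑R) ∧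
  (Algebra.TensorProduct.map Δ' (AlgHom.id F H)) (↑R : H ⊗[F] H)
      = ι₁₃ F H ↑R * ι₂₃ F H ↑R ∧
  ((Algebra.TensorProduct.assoc F F F H H H).symm
      ((Algebra.TensorProduct.map (AlgHom.id F H) Δ') (↑R : H ⊗[F] H)))
      = ι₁₃ F H ↑R * ι₁₂ F H ↑R

/-- The unit of `H ⊗ H` obtained by applying `Δ` to a unit of `H`. -/
def uComul (g : Hˣ) : (H ⊗[F] H)ˣ :=
  ⟨Δ F H ↑g, Δ F H ↑g⁻¹,
    by rw [← map_mul, Units.mul_inv, map_one],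
    by rw [← map_mul, Units.inv_mul, map_one]⟩

/-- A Drinfeld twist: an invertible `J ∈ H ⊗ H` with `(ε⊗id)(J) = 1 = (id⊗ε)(J)`
satisfying the cocycle identity `(J⊗1)(Δ⊗id)(J) = (1⊗J)(id⊗Δ)(J)`. -/
def IsTwist (J : (H ⊗[F] H)ˣ) : Prop :=
  (Algebra.TensorProduct.lid F H)
      ((Algebra.TensorProduct.map (ε F H) (AlgHom.id F H)) ↑J) = 1 ∧
  (Algebra.TensorProduct.rid F F H)
      ((Algebra.TensorProduct.map (AlgHom.id F H) (ε F H)) ↑J) = 1 ∧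
  ι₁₂ F H ↑J * Δ₁ F H ↑J = ι₂₃ F H ↑J * Δ₂ F H ↑J

/-- A twist pair `(ψ, J)`: `Δ^{op,ψ} = Ad(J) ∘ Δ` and `(ψ⊗ψ)(R₂₁) = J₂₁ R J⁻¹`. -/
def TwistPair (R : (H ⊗[F] H)ˣ) (ψ : H ≃ₐ[F] H) (J : (H ⊗[F] H)ˣ) : Prop :=
  (∀ x : H, (Algebra.TensorProduct.map ψ.toAlgHom ψ.toAlgHom)
      (τ₂ F H (Δ F H (ψ.symm x))) = ↑J * Δ F H x * ↑J⁻¹) ∧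
  ((Algebra.TensorProduct.map ψ.toAlgHom ψ.toAlgHom) (τ₂ F H ↑R)
      = ↑(uflip F H J) * ↑R * ↑J⁻¹)

/-! Apply the quasitriangularity relation `R Δ(k) = Δ^op(k) R` to the assumed formula for `Δ(k)`.
On the left, the twist-pair relation `(ψ⊗ψ)(R₂₁) = J₂₁ R J⁻¹` rewrites `R J⁻¹` as
`J₂₁⁻¹ (ψ⊗ψ)(R₂₁)`; on the right, `Δ^op(k)` begins with `J₂₁⁻¹`. Cancelling `J₂₁⁻¹` leaves the
reflection equation. -/

theorem flip_comul_eq_of_comul_eq {R J : (H ⊗[F] H)ˣ} {ψ : H ≃ₐ[F] H} {k : Hˣ}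
    (hk : Δ F H ↑k
        = ↑J⁻¹ * ((1 : H) ⊗ₜ[F] (↑k : H))
            * (Algebra.TensorProduct.map ψ.toAlgHom (AlgHom.id F H)) ↑R
            * ((↑k : H) ⊗ₜ[F] (1 : H))) :
    τ₂ F H (Δ F H ↑k)
      = τ₂ F H ↑J⁻¹ * ((↑k : H) ⊗ₜ[F] (1 : H))
          * τ₂ F H ((Algebra.TensorProduct.map ψ.toAlgHom (AlgHom.id F H)) ↑R)
          * ((1 : H) ⊗ₜ[F] (↑k : H)) := by
  rw [hk]
  simp only [map_mul, τ₂, Algebra.TensorProduct.comm_tmul]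

theorem TwistPair.mul_inv_eq {R J : (H ⊗[F] H)ˣ} {ψ : H ≃ₐ[F] H} (h : TwistPair F H R ψ J) :
    ↑R * ↑J⁻¹
      = τ₂ F H ↑J⁻¹ * (Algebra.TensorProduct.map ψ.toAlgHom ψ.toAlgHom) (τ₂ F H ↑R) := by
  rw [h.2, uflip, Units.val_mk, ← mul_assoc, ← mul_assoc, ← map_mul, Units.inv_mul, map_one,
    one_mul]

theorem twisted_reflection_equation (R J : (H ⊗[F] H)ˣ) (ψ : H ≃ₐ[F] H) (k : Hˣ)
    (hR : IsQuasiTri F H (Δ F H) R)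
    (hpair : TwistPair F H R ψ J)
    (hk : Δ F H ↑k
        = ↑J⁻¹ * ((1 : H) ⊗ₜ[F] (↑k : H))
            * (Algebra.TensorProduct.map ψ.toAlgHom (AlgHom.id F H)) ↑R
            * ((↑k : H) ⊗ₜ[F] (1 : H))) :
    ((↑k : H) ⊗ₜ[F] (1 : H))
        * τ₂ F H ((Algebra.TensorProduct.map ψ.toAlgHom (AlgHom.id F H)) ↑R)
        * ((1 : H) ⊗ₜ[F] (↑k : H)) * ↑R
      = (Algebra.TensorProduct.map ψ.toAlgHom ψ.toAlgHom) (τ₂ F H ↑R)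
        * ((1 : H) ⊗ₜ[F] (↑k : H))
        * (Algebra.TensorProduct.map ψ.toAlgHom (AlgHom.id F H)) ↑R
        * ((↑k : H) ⊗ₜ[F] (1 : H)) := by
  apply ((Units.isUnit J⁻¹).map (τ₂ F H)).mul_left_cancel
  calc _ = τ₂ F H (Δ F H ↑k) * ↑R := by
          rw [flip_comul_eq_of_comul_eq F H hk]
          simp only [mul_assoc]
    _ = ↑R * Δ F H ↑k := (hR.1 k).symm
    _ = ↑R * ↑J⁻¹ * (((1 : H) ⊗ₜ[F] (↑k : H))
          * (Algebra.TensorProduct.map ψ.toAlgHom (AlgHom.id F H)) ↑R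
          * ((↑k : H) ⊗ₜ[F] (1 : H))) := by
          rw [hk]
          simp only [mul_assoc]
    _ = _ := by
          rw [hpair.mul_inv_eq]
          simp only [mul_assoc]

end
end

section
/- Let A = (a_{ij})_{i,j∈I} be a matrix with integer entries, I finite, with corank exactly 1, and let τ be a diagram automorphism of A (a permutation of I with a_{τ(i)τ(j)} = a_{ij}). Then τ acts on Ker(A) ⊆ ℚ^I (or ℂ^I) by multiplication by a sign ζ ∈ {±1}. Moreover, there exists a τ-compatible scaling element (i.e. a linear functional d with α_j(d) ∈ ℤ for all j and α_{τ(j)}(d) = α_j(d) extending to a framed realization) if and only if ζ = +1. -/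
/-- for an integer matrix `A` of corank one with a diagram
automorphism `τ`, the permutation `τ` acts on `Ker(A)` by a sign `ζ ∈ {±1}`,
and a `τ`-compatible scaling element (i.e. a `τ`-invariant integer tuple
`c = (α_j(d))_j` making the simple roots of the framed realization linearly
independent) exists if and only if `ζ = 1`. -/
theorem tau_compatible_scaling_element_iff
    {I : Type*} [Fintype I] [DecidableEq I]
    (A : Matrix I I ℤ) (τ : Equiv.Perm I)
    (hτ : ∀ i j, A (τ i) (τ j) = A i j)
    (hcorank : Module.finrank ℚ
        (LinearMap.ker (Matrix.mulVecLin (A.map (Int.cast : ℤ → ℚ)))) = 1) :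
    ∃ ζ : ℚ, (ζ = 1 ∨ ζ = -1) ∧
      (∀ x : I → ℚ, (A.map (Int.cast : ℤ → ℚ)).mulVec x = 0 →
        (fun i => x (τ.symm i)) = ζ • x) ∧
      ((∃ c : I → ℤ, (∀ j, c (τ j) = c j) ∧
          LinearIndependent ℚ
            (fun j : I => ((fun i => (A i j : ℚ), (c j : ℚ)) : (I → ℚ) × ℚ)))
        ↔ ζ = 1) := by
  set B := A.map (Int.cast : ℤ → ℚ) with hBdef
  have hBτ : ∀ i j, B (τ i) (τ j) = B i j := by
    intro i j
    simp [hBdef, Matrix.map_apply, hτ i j]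
  -- mulVec commutes with the permutation
  have key : ∀ (x : I → ℚ) (i : I),
      B.mulVec (fun j => x (τ.symm j)) i = B.mulVec x (τ.symm i) := by
    intro x i
    simp only [Matrix.mulVec, dotProduct]
    rw [show (∑ j, B i j * x (τ.symm j)) = ∑ k, B i (τ k) * x (τ.symm (τ k)) from
      (Equiv.sum_comp τ (fun j => B i j * x (τ.symm j))).symm]
    refine Finset.sum_congr rfl fun k _ => ?_
    have h1 : B i (τ k) = B (τ.symm i) k := by
      conv_lhs => rw [← τ.apply_symm_apply i]
      exact hBτ (τ.symm i) k
    simp [h1]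
  have memker : ∀ x : I → ℚ, B.mulVec x = 0 →
      B.mulVec (fun j => x (τ.symm j)) = 0 := by
    intro x hx
    funext i
    rw [key x i, hx]
    rfl
  -- generator of the kernel
  obtain ⟨v₀, hv₀ne, hgen⟩ :=
    (finrank_eq_one_iff' (K := ℚ) (V := LinearMap.ker B.mulVecLin)).mp hcorank
  set v : I → ℚ := (v₀ : I → ℚ) with hvdef
  have hvker : B.mulVec v = 0 := v₀.2
  have hvne : v ≠ 0 := by
    intro h
    exact hv₀ne (Subtype.ext h)
  -- every kernel vector is a multiple of v
  have hmul : ∀ x : I → ℚ, B.mulVec x = 0 → ∃ t : ℚ, x = t • v := by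
    intro x hx
    obtain ⟨t, ht⟩ := hgen ⟨x, hx⟩
    refine ⟨t, ?_⟩
    have h2 := Subtype.ext_iff.mp ht
    simpa using h2.symm
  -- the sign ζ
  obtain ⟨ζ, hζ⟩ := hmul (fun j => v (τ.symm j)) (memker v hvker)
  have hζv : ∀ j, v (τ.symm j) = ζ * v j := fun j => congrFun hζ j
  -- claim 2 : action on the kernel
  have claim2 : ∀ x : I → ℚ, B.mulVec x = 0 →
      (fun i => x (τ.symm i)) = ζ • x := by
    intro x hx
    obtain ⟨t, ht⟩ := hmul x hx
    funext i
    simp only [ht, Pi.smul_apply, smul_eq_mul, hζv i]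
    ring
  -- ζ is ±1
  have hpow : ∀ (n : ℕ) (j : I), v ((τ.symm ^ n) j) = ζ ^ n * v j := by
    intro n
    induction n with
    | zero => intro j; simp
    | succ n ih =>
      intro j
      rw [pow_succ, Equiv.Perm.mul_apply, ih, hζv, pow_succ]
      ring
  obtain ⟨j₀, hj₀⟩ : ∃ j, v j ≠ 0 := by
    by_contra h
    push_neg at h
    exact hvne (funext h)
  have hordne : orderOf τ ≠ 0 := (orderOf_pos τ).ne'
  have hζn : ζ ^ orderOf τ = 1 := by
    have h1 : τ.symm ^ orderOf τ = 1 := by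
      have h2 : τ ^ orderOf τ = 1 := pow_orderOf_eq_one τ
      rw [← Equiv.Perm.inv_def, inv_pow, h2, inv_one]
    have h3 := hpow (orderOf τ) j₀
    rw [h1, Equiv.Perm.one_apply] at h3
    exact mul_right_cancel₀ hj₀ (by rw [one_mul, ← h3])
  have hζpm : ζ = 1 ∨ ζ = -1 := by
    rcases (pow_eq_one_iff_of_ne_zero hordne).mp hζn with h | h
    · exact Or.inl h
    · exact Or.inr h.1
  -- splitting sums of pairs
  have hsplit : ∀ (c : I → ℤ) (g : I → ℚ),
      (∑ j, g j • ((fun i => (A i j : ℚ), (c j : ℚ)) : (I → ℚ) × ℚ))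
        = (B.mulVec g, ∑ j, g j * (c j : ℚ)) := by
    intro c g
    refine Prod.ext ?_ ?_
    · rw [Prod.fst_sum]
      funext i
      rw [Finset.sum_apply]
      simp only [Prod.smul_mk, Pi.smul_apply, smul_eq_mul, Matrix.mulVec,
        dotProduct, hBdef, Matrix.map_apply]
      exact Finset.sum_congr rfl fun j _ => mul_comm _ _
    · rw [Prod.snd_sum]
      simp [smul_eq_mul]
  -- characterization of the linear independence
  have char : ∀ c : I → ℤ,
      (LinearIndependent ℚ
        (fun j : I => ((fun i => (A i j : ℚ), (c j : ℚ)) : (I → ℚ) × ℚ)))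
      ↔ (∑ j, (c j : ℚ) * v j) ≠ 0 := by
    intro c
    rw [Fintype.linearIndependent_iff]
    constructor
    · intro h hsum
      refine hvne (funext fun j => h v ?_ j)
      rw [hsplit c v, Prod.mk_eq_zero]
      constructor
      · exact hvker
      · rw [← hsum]
        exact Finset.sum_congr rfl fun j _ => mul_comm _ _
    · intro hS g hg j
      rw [hsplit c g, Prod.mk_eq_zero] at hg
      obtain ⟨t, ht⟩ := hmul g hg.1
      have h2 : t * ∑ j, (c j : ℚ) * v j = 0 := by
        rw [Finset.mul_sum, ← hg.2]
        refine Finset.sum_congr rfl fun j _ => ?_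
        rw [ht]
        simp only [Pi.smul_apply, smul_eq_mul]
        ring
      have ht0 : t = 0 := by
        rcases mul_eq_zero.mp h2 with h | h
        · exact h
        · exact absurd h hS
      rw [ht, ht0, zero_smul]
      rfl
  refine ⟨ζ, hζpm, claim2, ?_⟩
  constructor
  · -- existence of c implies ζ = 1
    rintro ⟨c, hcinv, hcli⟩
    have hS := (char c).mp hcli
    rcases hζpm with h | h
    · exact h
    · exfalso
      apply hS
      -- ∑ c j * v j = ζ * ∑ c j * v j and ζ = -1
      have e1 : (∑ j, (c j : ℚ) * v (τ.symm j)) = ∑ j, (c j : ℚ) * v j := by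
        rw [← Equiv.sum_comp τ (fun j => (c j : ℚ) * v (τ.symm j))]
        refine Finset.sum_congr rfl fun k _ => ?_
        rw [hcinv k, τ.symm_apply_apply]
      have e2 : (∑ j, (c j : ℚ) * v (τ.symm j)) = ζ * ∑ j, (c j : ℚ) * v j := by
        rw [Finset.mul_sum]
        refine Finset.sum_congr rfl fun j _ => ?_
        rw [hζv j]
        ring
      rw [e1, h] at e2
      linarith
  · -- ζ = 1 implies existence of c
    intro hζ1
    have hvτ : ∀ j, v (τ j) = v j := by
      intro j
      have h := hζv (τ j)
      rw [τ.symm_apply_apply, hζ1, one_mul] at h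
      exact h.symm
    set N : ℤ := ∏ i, ((v i).den : ℤ) with hNdef
    have hNpos : 0 < N := Finset.prod_pos fun i _ => by
      exact_mod_cast (v i).den_pos
    have hdvd : ∀ j, ((v j).den : ℤ) ∣ N :=
      fun j => Finset.dvd_prod_of_mem _ (Finset.mem_univ j)
    refine ⟨fun j => N / ((v j).den : ℤ) * (v j).num, ?_, ?_⟩
    · intro j
      simp only [hvτ j]
    · rw [char]
      have hcast : ∀ j, ((N / ((v j).den : ℤ) * (v j).num : ℤ) : ℚ) = (N : ℚ) * v j := by
        intro j
        have hd0 : (((v j).den : ℕ) : ℚ) ≠ 0 := by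
          exact_mod_cast (v j).den_pos.ne'
        have hnum2 : (((v j).num : ℤ) : ℚ) = v j * (((v j).den : ℕ) : ℚ) :=
          (div_eq_iff hd0).mp (Rat.num_div_den (v j))
        have hdiv : ((N / ((v j).den : ℤ) : ℤ) : ℚ) * (((v j).den : ℕ) : ℚ) = (N : ℚ) := by
          rw [show (((v j).den : ℕ) : ℚ) = (((v j).den : ℤ) : ℚ) by push_cast; ring,
            ← Int.cast_mul, Int.ediv_mul_cancel (hdvd j)]
        calc ((N / ((v j).den : ℤ) * (v j).num : ℤ) : ℚ)
            = ((N / ((v j).den : ℤ) : ℤ) : ℚ) * (((v j).num : ℤ) : ℚ) := by push_cast; ring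
          _ = ((N / ((v j).den : ℤ) : ℤ) : ℚ) * (v j * (((v j).den : ℕ) : ℚ)) := by rw [hnum2]
          _ = (((N / ((v j).den : ℤ) : ℤ) : ℚ) * (((v j).den : ℕ) : ℚ)) * v j := by ring
          _ = (N : ℚ) * v j := by rw [hdiv]
      have hsum : (∑ j, ((N / ((v j).den : ℤ) * (v j).num : ℤ) : ℚ) * v j)
          = (N : ℚ) * ∑ j, v j * v j := by
        rw [Finset.mul_sum]
        refine Finset.sum_congr rfl fun j _ => ?_
        rw [hcast j]
        ring
      rw [hsum]
      have hsq : (0 : ℚ) < ∑ j, v j * v j := by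
        refine Finset.sum_pos' (fun j _ => mul_self_nonneg _) ⟨j₀, Finset.mem_univ j₀, ?_⟩
        exact mul_self_pos.mpr hj₀
      positivity
end

section
/- Let τ be an involutive diagram automorphism of an integer matrix A of corank 1 acting on Ker(A) by −1. Then every τ-orbit J ⊆ I on which the kernel coordinate function is nonzero has even cardinality, and for any functional d with α_{τ(j)}(d) = α_j(d) for all j ∈ I, one has δ(d) = Σ_j a_j α_j(d) = 0, where (a_j) spans Ker(A); consequently the functionals {α_j} together with δ cannot remain linearly independent on a framed realization, so no τ-compatible framed realization exists. -/
/-!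
Since `τ` negates the kernel vector `a` and fixes `c`, it negates every term `a j * c j`, so
`∑ j, a j * c j` equals its own negative and vanishes. Together with `A *ᵥ a = 0` this says that
`a ≠ 0` is a linear relation among the extended columns `(A_{·j}, c j)`. Similarly `a (τ i) = -a i`
forces `τ i ≠ i` wherever `a i ≠ 0`, so such orbits have two elements.
-/

section TorsionFree

variable {ι M : Type*} [AddCommGroup M] [IsAddTorsionFree M]

theorem Fintype.sum_eq_zero_of_comp_perm_eq_neg [Fintype ι] (σ : Equiv.Perm ι) {f : ι → M}
    (hf : ∀ j, f (σ j) = -f j) : ∑ j, f j = 0 := by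
  have hsum : ∑ j, f j = -∑ j, f j := calc
    ∑ j, f j = ∑ j, f (σ j) := (Equiv.sum_comp σ f).symm
    _ = -∑ j, f j := by simp only [hf, Finset.sum_neg_distrib]
  exact neg_eq_self.mp hsum.symm

theorem Equiv.Perm.apply_ne_self_of_apply_eq_neg (σ : Equiv.Perm ι) {f : ι → M}
    (hf : ∀ j, f (σ j) = -f j) {i : ι} (hi : f i ≠ 0) : σ i ≠ i := by
  intro hfix
  exact hi (neg_eq_self.mp (by rw [← hf, hfix]))

end TorsionFree

theorem Matrix.not_linearIndependent_cols_prod_of_mulVec_eq_zero {R m n : Type*} [CommRing R]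
    [Fintype n] (M : Matrix m n R) (c x : n → R) (hx : x ≠ 0) (hMx : M.mulVec x = 0)
    (hcx : ∑ j, x j * c j = 0) :
    ¬ LinearIndependent R (fun j => ((fun i => M i j, c j) : (m → R) × R)) := by
  rw [Fintype.not_linearIndependent_iff]
  refine ⟨x, Prod.ext ?_ ?_, Function.ne_iff.mp hx⟩
  · funext i
    simpa [Prod.fst_sum, Finset.sum_apply, Matrix.mulVec, dotProduct, mul_comm] using congrFun hMx i
  · simpa [Prod.snd_sum] using hcx

theorem no_tau_compatible_realization_of_minus_one_general
    {I : Type*} [Fintype I] [DecidableEq I]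
    (A : Matrix I I ℤ) (τ : Equiv.Perm I)
    (a : I → ℤ) (ha0 : a ≠ 0)
    (haker : A.mulVec a = 0)
    (hminus : ∀ j, a (τ j) = - a j) :
    (∀ i, a i ≠ 0 → Even ({i, τ i} : Finset I).card) ∧
    (∀ c : I → ℤ, (∀ j, c (τ j) = c j) → (∑ j, a j * c j) = 0) ∧
    ¬ ∃ c : I → ℤ, (∀ j, c (τ j) = c j) ∧
        LinearIndependent ℚ
          (fun j : I => ((fun i => (A i j : ℚ), (c j : ℚ)) : (I → ℚ) × ℚ)) := by
  refine ⟨fun i hi => ?_, fun c hc => ?_, ?_⟩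
  · rw [Finset.card_pair (τ.apply_ne_self_of_apply_eq_neg hminus hi).symm]
    exact even_two
  · exact Fintype.sum_eq_zero_of_comp_perm_eq_neg τ fun j => by rw [hminus, hc, neg_mul]
  · rintro ⟨c, hc, hli⟩
    have hminusℚ : ∀ j, (a (τ j) : ℚ) = -a j := fun j => by rw [hminus, Int.cast_neg]
    refine (A.map (Int.cast : ℤ → ℚ)).not_linearIndependent_cols_prod_of_mulVec_eq_zero
      (fun j => c j) (fun j => a j) ?_ ?_ ?_ hli
    · exact fun h => ha0 (funext fun i => by simpa using congrFun h i)
    · funext i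
      have hcast := ((Int.castRingHom ℚ).map_mulVec A a i).symm
      rw [haker] at hcast
      exact hcast.trans (map_zero _)
    · exact Fintype.sum_eq_zero_of_comp_perm_eq_neg τ fun j => by rw [hminusℚ, hc, neg_mul]

/-- if an involutive diagram automorphism `τ` of a corank-one
integer matrix `A` acts on the kernel (spanned by `a`) by `−1`, then every
`τ`-orbit on which `a` is nonzero has even cardinality, any `τ`-invariant
integer tuple `c = (α_j(d))_j` satisfies `δ(d) = ∑ a_j c_j = 0`, and
consequently there is no `τ`-compatible framed realization (no `τ`-invariant
scaling element keeps the simple roots linearly independent). -/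
theorem no_tau_compatible_realization_of_minus_one
    {I : Type*} [Fintype I] [DecidableEq I]
    (A : Matrix I I ℤ) (τ : Equiv.Perm I)
    (hτ : ∀ i j, A (τ i) (τ j) = A i j)
    (hτ2 : ∀ i, τ (τ i) = i)
    (a : I → ℤ) (ha0 : a ≠ 0)
    (haker : A.mulVec a = 0)
    (hspan : ∀ x : I → ℚ, (A.map (Int.cast : ℤ → ℚ)).mulVec x = 0 →
        ∃ t : ℚ, x = t • fun i => (a i : ℚ))
    (hminus : ∀ j, a (τ j) = - a j) :
    (∀ i, a i ≠ 0 → Even ({i, τ i} : Finset I).card) ∧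
    (∀ c : I → ℤ, (∀ j, c (τ j) = c j) → (∑ j, a j * c j) = 0) ∧
    ¬ ∃ c : I → ℤ, (∀ j, c (τ j) = c j) ∧
        LinearIndependent ℚ
          (fun j : I => ((fun i => (A i j : ℚ), (c j : ℚ)) : (I → ℚ) × ℚ)) :=
  no_tau_compatible_realization_of_minus_one_general A τ a ha0 haker hminus
end
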